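/- arXiv:1702.01643 — 2 statements merged into one kernel-verified Lean document; each statement's English description precedes it below -/
import Mathlib

section
/- Two cocycles of the form C_S and C_{S'} for integer 3-tensors S, S' differ by a coboundary whenever the total antisymmetrizations of S and S' agree; consequently the cohomology class of C_S depends only on the integer p = (1/6) Σ ε_{jkl} S_{jkl} when S is such that this antisymmetrization is p·ε. -/
/- STATEMENT 4: Cocycles `C_S` and `C_{S'}` for integer 3-tensors `S, S'` differ
by a coboundary whenever the total antisymmetrizations of `S` and `S'` agree;
consequently the cohomology class of `C_S` depends only on the integer
`p = (1/6) Σ ε_{jkl} S_{jkl}` when the antisymmetrization of `S` is `p·ε`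
(i.e. `Asym S = 6p·ε`): in that case `C_S` is cohomologous to the level-`p`
cocycle `exp(2πi p · det[a,n,m])`. -/

noncomputable def CS (S : Fin 3 → Fin 3 → Fin 3 → ℤ)
    (a : Fin 3 → ℝ) (n m : Fin 3 → ℤ) : ℂ :=
  Complex.exp (2 * Real.pi * Complex.I *
    (∑ j : Fin 3, ∑ k : Fin 3, ∑ l : Fin 3, (S j k l : ℝ) * a j * (n k : ℝ) * (m l : ℝ)))

/-- Total antisymmetrization of a 3-index tensor (sum over the 6 permutations
of the index slots, with signs). -/
def Asym (S : Fin 3 → Fin 3 → Fin 3 → ℤ) (j k l : Fin 3) : ℤ :=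
  ∑ σ : Equiv.Perm (Fin 3), (Equiv.Perm.sign σ : ℤ) *
    S (![j, k, l] (σ 0)) (![j, k, l] (σ 1)) (![j, k, l] (σ 2))

/-- Totally antisymmetric ε-tensor with `ε 0 1 2 = 1`. -/
def eps (j k l : Fin 3) : ℤ :=
  (((k : ℤ) - (j : ℤ)) * ((l : ℤ) - (k : ℤ)) * ((l : ℤ) - (j : ℤ))) / 2

/-- Scalar triple product `det[a, n, m]`. -/
noncomputable def trip (a : Fin 3 → ℝ) (n m : Fin 3 → ℤ) : ℝ :=
  a 0 * ((n 1 : ℝ) * (m 2 : ℝ) - (n 2 : ℝ) * (m 1 : ℝ)) +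
  a 1 * ((n 2 : ℝ) * (m 0 : ℝ) - (n 0 : ℝ) * (m 2 : ℝ)) +
  a 2 * ((n 0 : ℝ) * (m 1 : ℝ) - (n 1 : ℝ) * (m 0 : ℝ))


/-!
Work with real phases modulo `ℤ`: `C_S = exp (2πi φ_S)` where `φ_S a n m = Σ S_{jkl} a_j n_k m_l`.
The coboundary of the polynomial phase `a_j a_k n_l` is `a_j n_k m_l + a_k n_j m_l` up to the
integer `n_j n_k m_l`, and that of `-a_j n_k n_l` is `a_j n_k m_l + a_j n_l m_k` up to `-n_j m_k m_l`:
monomials related by swapping two adjacent slots are opposite modulo coboundaries. Monomials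
with a repeated index are coboundaries: `a_j n_j m_l` up to an integer of `a_j (a_j - 1) / 2 · n_l`,
`a_j n_k m_k` of `-a_j n_k (n_k - 1) / 2`, and `a_j n_k m_j` then by a swap. Hence
`φ_S ≡ Asym S 0 1 2 · a_0 n_1 m_2`.
-/

open Complex

section Phase

/-- Real phases `φ` such that `exp (2πi φ)` is the coboundary of `exp (2πi β)` for a real
phase `β`, i.e. `φ ≡ δβ` modulo `ℤ`. -/
def phaseCoboundaries (ι : Type*) : AddSubgroup ((ι → ℝ) → (ι → ℤ) → (ι → ℤ) → ℝ) where
  carrier := {φ | ∃ β : (ι → ℝ) → (ι → ℤ) → ℝ, ∀ a n m, ∃ z : ℤ,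
    φ a n m = β a n + β (fun i => a i + (n i : ℝ)) m - β a (n + m) + z}
  zero_mem' := ⟨0, fun _ _ _ => ⟨0, by simp⟩⟩
  add_mem' := by
    rintro φ ψ ⟨β, hβ⟩ ⟨γ, hγ⟩
    refine ⟨β + γ, fun a n m => ?_⟩
    obtain ⟨z, hz⟩ := hβ a n m
    obtain ⟨w, hw⟩ := hγ a n m
    exact ⟨z + w, by simp only [Pi.add_apply, hz, hw]; push_cast; ring⟩
  neg_mem' := by
    rintro φ ⟨β, hβ⟩
    refine ⟨-β, fun a n m => ?_⟩
    obtain ⟨z, hz⟩ := hβ a n m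
    exact ⟨-z, by simp only [Pi.neg_apply, hz]; push_cast; ring⟩

variable {ι : Type*}

theorem exists_coboundary_of_sub_mem_phaseCoboundaries
    {φ ψ : (ι → ℝ) → (ι → ℤ) → (ι → ℤ) → ℝ} (h : φ - ψ ∈ phaseCoboundaries ι) :
    ∃ b : (ι → ℝ) → (ι → ℤ) → ℂ, (∀ a n, ‖b a n‖ = 1) ∧
      ∀ a n m, exp (2 * Real.pi * I * φ a n m) = exp (2 * Real.pi * I * ψ a n m) *
        (b a n * b (fun i => a i + (n i : ℝ)) m * (b a (n + m))⁻¹) := by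
  obtain ⟨β, hβ⟩ := h
  refine ⟨fun a n => exp (2 * Real.pi * I * β a n), fun a n => ?_, fun a n m => ?_⟩
  · rw [norm_exp]
    simp
  · obtain ⟨z, hz⟩ := hβ a n m
    have hφ : φ a n m = ψ a n m + (β a n + β (fun i => a i + (n i : ℝ)) m - β a (n + m) + z) := by
      simp only [Pi.sub_apply] at hz
      linarith
    simp only [← exp_neg, ← exp_add]
    rw [exp_eq_exp_iff_exists_int]
    exact ⟨z, by rw [hφ]; push_cast; ring⟩

def phaseMonomial (j k l : ι) : (ι → ℝ) → (ι → ℤ) → (ι → ℤ) → ℝ :=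
  fun a n m => a j * n k * m l

theorem phaseMonomial_add_swap_first_mem (j k l : ι) :
    phaseMonomial j k l + phaseMonomial k j l ∈ phaseCoboundaries ι :=
  ⟨fun a n => a j * a k * n l, fun a n m =>
    ⟨-(n j * n k * m l), by simp only [phaseMonomial, Pi.add_apply]; push_cast; ring⟩⟩

theorem phaseMonomial_add_swap_last_mem (j k l : ι) :
    phaseMonomial j k l + phaseMonomial j l k ∈ phaseCoboundaries ι :=
  ⟨fun a n => -(a j * n k * n l), fun a n m =>
    ⟨n j * m k * m l, by simp only [phaseMonomial, Pi.add_apply]; push_cast; ring⟩⟩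

theorem phaseMonomial_diag_first_mem (j l : ι) :
    phaseMonomial j j l ∈ phaseCoboundaries ι :=
  ⟨fun a n => a j * (a j - 1) / 2 * n l, fun a n m => by
    obtain ⟨r, hr⟩ := Int.even_mul_pred_self (n j)
    have hr' : (n j : ℝ) * (n j - 1) = r + r := by exact_mod_cast hr
    refine ⟨-(r * m l), ?_⟩
    simp only [phaseMonomial, Pi.add_apply]
    push_cast
    linear_combination (-(m l : ℝ) / 2) * hr'⟩

theorem phaseMonomial_diag_last_mem (j k : ι) :
    phaseMonomial j k k ∈ phaseCoboundaries ι :=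
  ⟨fun a n => -(a j * (n k * (n k - 1) / 2)), fun a n m => by
    obtain ⟨r, hr⟩ := Int.even_mul_pred_self (m k)
    have hr' : (m k : ℝ) * (m k - 1) = r + r := by exact_mod_cast hr
    refine ⟨n j * r, ?_⟩
    simp only [phaseMonomial, Pi.add_apply]
    push_cast
    linear_combination ((n j : ℝ) / 2) * hr'⟩

theorem phaseMonomial_diag_outer_mem (j k : ι) :
    phaseMonomial j k j ∈ phaseCoboundaries ι := by
  simpa using sub_mem (phaseMonomial_add_swap_last_mem j j k) (phaseMonomial_diag_first_mem j k)

variable [Fintype ι]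

def tensorPhase (T : ι → ι → ι → ℤ) : (ι → ℝ) → (ι → ℤ) → (ι → ℤ) → ℝ :=
  fun a n m => ∑ j, ∑ k, ∑ l, (T j k l : ℝ) * a j * (n k : ℝ) * (m l : ℝ)

theorem tensorPhase_eq_sum (T : ι → ι → ι → ℤ) :
    tensorPhase T = ∑ j, ∑ k, ∑ l, T j k l • phaseMonomial j k l := by
  ext a n m
  simp only [Finset.sum_apply, Pi.smul_apply]
  simp only [tensorPhase, phaseMonomial, zsmul_eq_mul, mul_assoc]

end Phase

theorem eps_swap_first : ∀ j k l : Fin 3, eps k j l = -eps j k l := by decide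

theorem eps_swap_last : ∀ j k l : Fin 3, eps j l k = -eps j k l := by decide

theorem asym_eq_sum_eps (T : Fin 3 → Fin 3 → Fin 3 → ℤ) :
    Asym T 0 1 2 = ∑ j, ∑ k, ∑ l, eps j k l * T j k l := by
  have huniv : (Finset.univ : Finset (Equiv.Perm (Fin 3))) =
      {1, Equiv.swap 0 1, Equiv.swap 0 2, Equiv.swap 1 2,
        Equiv.swap 0 1 * Equiv.swap 1 2, Equiv.swap 1 2 * Equiv.swap 0 1} := by decide
  rw [Asym, huniv, Finset.sum_insert (by decide), Finset.sum_insert (by decide),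
    Finset.sum_insert (by decide), Finset.sum_insert (by decide), Finset.sum_insert (by decide),
    Finset.sum_singleton]
  simp +decide only [Fin.sum_univ_three, Equiv.Perm.sign_mul, Equiv.Perm.sign_swap',
    Equiv.Perm.sign_one, Equiv.Perm.coe_mul, Function.comp_apply, Equiv.swap_apply_def, eps]
  norm_num [Matrix.cons_val_two]
  ring

theorem phaseMonomial_sub_eps_smul_mem (j k l : Fin 3) :
    phaseMonomial j k l - eps j k l • phaseMonomial 0 1 2 ∈ phaseCoboundaries (Fin 3) := by
  set K := phaseCoboundaries (Fin 3)
  have swap_first : ∀ j k l, phaseMonomial j k l - eps j k l • phaseMonomial 0 1 2 ∈ K →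
      phaseMonomial k j l - eps k j l • phaseMonomial 0 1 2 ∈ K := by
    intro j k l h
    convert sub_mem (phaseMonomial_add_swap_first_mem j k l) h using 1
    rw [eps_swap_first, neg_smul]
    abel
  have swap_last : ∀ j k l, phaseMonomial j k l - eps j k l • phaseMonomial 0 1 2 ∈ K →
      phaseMonomial j l k - eps j l k • phaseMonomial 0 1 2 ∈ K := by
    intro j k l h
    convert sub_mem (phaseMonomial_add_swap_last_mem j k l) h using 1
    rw [eps_swap_last, neg_smul]
    abel
  by_cases hjk : j = k
  · subst hjk
    simpa [eps] using phaseMonomial_diag_first_mem j l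
  by_cases hkl : k = l
  · subst hkl
    simpa [eps] using phaseMonomial_diag_last_mem j k
  by_cases hjl : j = l
  · subst hjl
    simpa [eps] using phaseMonomial_diag_outer_mem j k
  have h012 : phaseMonomial 0 1 2 - eps 0 1 2 • phaseMonomial 0 1 2 ∈ K := by
    simp [show eps 0 1 2 = 1 by decide]
  have h102 := swap_first _ _ _ h012
  have h021 := swap_last _ _ _ h012
  have h120 := swap_last _ _ _ h102
  have h201 := swap_first _ _ _ h021
  have h210 := swap_first _ _ _ h120
  fin_cases j <;> fin_cases k <;> fin_cases l <;> first | assumption | simp at hjk hkl hjl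

theorem tensorPhase_sub_asym_smul_mem (T : Fin 3 → Fin 3 → Fin 3 → ℤ) :
    tensorPhase T - Asym T 0 1 2 • phaseMonomial 0 1 2 ∈ phaseCoboundaries (Fin 3) := by
  have hsum : tensorPhase T - Asym T 0 1 2 • phaseMonomial 0 1 2 =
      ∑ j, ∑ k, ∑ l, T j k l • (phaseMonomial j k l - eps j k l • phaseMonomial 0 1 2) := by
    simp only [tensorPhase_eq_sum, asym_eq_sum_eps, Finset.sum_smul, smul_sub, smul_smul,
      Finset.sum_sub_distrib, mul_comm]
  rw [hsum]
  exact sum_mem fun j _ => sum_mem fun k _ => sum_mem fun l _ =>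
    zsmul_mem (phaseMonomial_sub_eps_smul_mem j k l) _

theorem CS_eq_exp_tensorPhase (S : Fin 3 → Fin 3 → Fin 3 → ℤ) (a : Fin 3 → ℝ) (n m : Fin 3 → ℤ) :
    CS S a n m = exp (2 * Real.pi * I * tensorPhase S a n m) :=
  rfl

theorem exists_coboundary_of_asym_eq {S S' : Fin 3 → Fin 3 → Fin 3 → ℤ}
    (h : Asym S 0 1 2 = Asym S' 0 1 2) :
    ∃ b : (Fin 3 → ℝ) → (Fin 3 → ℤ) → ℂ, (∀ a n, ‖b a n‖ = 1) ∧
      ∀ a n m, CS S a n m = CS S' a n m *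
        (b a n * b (fun i => a i + (n i : ℝ)) m * (b a (n + m))⁻¹) := by
  simp only [CS_eq_exp_tensorPhase]
  apply exists_coboundary_of_sub_mem_phaseCoboundaries
  simpa [h] using sub_mem (tensorPhase_sub_asym_smul_mem S) (tensorPhase_sub_asym_smul_mem S')

theorem asym_intCast_mul_eps (p : ℤ) : Asym (fun j k l => p * eps j k l) 0 1 2 = 6 * p :=
  calc Asym (fun j k l => p * eps j k l) 0 1 2 = p * Asym eps 0 1 2 := by
        simp only [Asym, Finset.mul_sum]
        exact Finset.sum_congr rfl fun σ _ => by ring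
    _ = 6 * p := by rw [show Asym eps 0 1 2 = 6 by decide, mul_comm]

theorem tensorPhase_intCast_mul_eps (p : ℤ) (a : Fin 3 → ℝ) (n m : Fin 3 → ℤ) :
    tensorPhase (fun j k l => p * eps j k l) a n m = p * trip a n m := by
  simp only [tensorPhase, trip, Fin.sum_univ_three, eps, Int.cast_mul]
  norm_num
  ring

theorem stmt4 (S S' : Fin 3 → Fin 3 → Fin 3 → ℤ)
    (h : ∀ j k l, Asym S j k l = Asym S' j k l) :
    (∃ b : (Fin 3 → ℝ) → (Fin 3 → ℤ) → ℂ,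
      (∀ a n, ‖b a n‖ = 1) ∧
      ∀ (a : Fin 3 → ℝ) (n m : Fin 3 → ℤ),
        CS S a n m = CS S' a n m *
          (b a n * b (fun i => a i + (n i : ℝ)) m * (b a (n + m))⁻¹)) ∧
    ∀ p : ℤ, (∀ j k l, Asym S j k l = 6 * p * eps j k l) →
      ∃ b : (Fin 3 → ℝ) → (Fin 3 → ℤ) → ℂ,
        (∀ a n, ‖b a n‖ = 1) ∧
        ∀ (a : Fin 3 → ℝ) (n m : Fin 3 → ℤ),
          CS S a n m
            = Complex.exp (2 * Real.pi * Complex.I * ((p : ℝ) * trip a n m)) *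
              (b a n * b (fun i => a i + (n i : ℝ)) m * (b a (n + m))⁻¹) := by
  refine ⟨exists_coboundary_of_asym_eq (h 0 1 2), fun p hp => ?_⟩
  have hasym : Asym S 0 1 2 = Asym (fun j k l => p * eps j k l) 0 1 2 := by
    rw [hp, asym_intCast_mul_eps, show eps 0 1 2 = 1 by decide, mul_one]
  simpa only [CS_eq_exp_tensorPhase, tensorPhase_intCast_mul_eps, ofReal_mul]
    using exists_coboundary_of_asym_eq hasym
end

section
/- Let F(a) = (a·σ)/|a| for a ∈ ℝ³ \ {0}, where σ = (σ₁,σ₂,σ₃) are the Pauli matrices. Then the 2-form (1/8)·tr(F dF ∧ dF) equals (√−1/4) ε_{ijk} (a_i/|a|³) da_j ∧ da_k, the unit monopole curvature form up to the factor √−1. -/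
/- STATEMENT 11: With `F(a) = (a·σ)/|a|` (σ the Pauli matrices), the 2-form
`(1/8) tr(F dF ∧ dF)` equals `(√−1/4) ε_{ijk} (a_i/|a|³) da_j ∧ da_k`, the unit
monopole curvature up to the factor `√−1`.  Encoding: evaluating both 2-forms on
the coordinate vectors `(e_j, e_k)` gives, for all `j, k`,
`(1/8)(tr(F ∂_jF ∂_kF) − tr(F ∂_kF ∂_jF)) = (i/2) Σ_i ε_{ijk} a_i / |a|³`. -/

noncomputable abbrev E3 := EuclideanSpace ℝ (Fin 3)

/-- The Pauli matrices `σ₁, σ₂, σ₃`. -/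
noncomputable def pauli : Fin 3 → Matrix (Fin 2) (Fin 2) ℂ :=
  ![!![0, 1; 1, 0], !![0, -Complex.I; Complex.I, 0], !![1, 0; 0, -1]]

/-- `F(a) = (a·σ)/|a|`. -/
noncomputable def Fmat (a : E3) : Matrix (Fin 2) (Fin 2) ℂ :=
  (‖a‖⁻¹ : ℝ) • ∑ i, ((a i : ℝ) : ℂ) • pauli i

/-- The partial derivative `∂_j F` at `a`, computed entrywise. -/
noncomputable def dFmat (j : Fin 3) (a : E3) : Matrix (Fin 2) (Fin 2) ℂ :=
  Matrix.of fun i k => fderiv ℝ (fun x : E3 => Fmat x i k) a (EuclideanSpace.single j 1)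

/-!
Write `F = n·σ` with `n = a/|a|`. Each partial derivative is again of this shape,
`∂_jF = v_j·σ` with `v_j = (e_j - n_j n)/|a|`, and the Pauli relations give
`tr((n·σ)(u·σ)(v·σ)) = 2i n·(u×v)`. So the antisymmetrised trace is `4i n·(v_j×v_k)`;
the components of `v_j, v_k` along `n` drop out of the triple product, leaving
`n·(e_j×e_k)/|a|² = Σ_i ε_{ijk} a_i/|a|³`.
-/

section UnitVector

variable {E : Type*} [NormedAddCommGroup E] [InnerProductSpace ℝ E] {a : E}

theorem hasFDerivAt_norm (ha : a ≠ 0) :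
    HasFDerivAt (fun x : E => ‖x‖) (‖a‖⁻¹ • innerSL ℝ a) a := by
  have hsqrt := (Real.hasDerivAt_sqrt (pow_pos (norm_pos_iff.2 ha) 2).ne').comp_hasFDerivAt a
    (hasStrictFDerivAt_norm_sq a).hasFDerivAt
  simp only [Function.comp_def, Real.sqrt_sq (norm_nonneg _)] at hsqrt
  refine hsqrt.congr_fderiv ?_
  ext y
  simp only [one_div, mul_inv_rev, _root_.smul_apply, coe_innerSL_apply,
    nsmul_eq_mul, Nat.cast_ofNat, smul_eq_mul]
  field_simp

theorem hasFDerivAt_inv_norm_smul (ha : a ≠ 0) :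
    HasFDerivAt (fun x : E => ‖x‖⁻¹ • x)
      (‖a‖⁻¹ • ContinuousLinearMap.id ℝ E - (‖a‖ ^ 3)⁻¹ • (innerSL ℝ a).smulRight a) a := by
  have hinv := (hasDerivAt_inv (norm_ne_zero_iff.2 ha)).comp_hasFDerivAt a (hasFDerivAt_norm ha)
  refine (hinv.smul (hasFDerivAt_id a)).congr_fderiv ?_
  ext y
  simp only [Function.comp_apply, neg_smul, id_eq, _root_.add_apply,
    _root_.smul_apply, ContinuousLinearMap.id_apply,
    ContinuousLinearMap.smulRight_apply, _root_.neg_apply, coe_innerSL_apply,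
    smul_eq_mul, _root_.sub_apply]
  module

end UnitVector

open Matrix

section CrossProduct

variable {R : Type*} [CommRing R]

theorem dotProduct_cross_sub_smul (a u v : Fin 3 → R) (c s t : R) :
    a ⬝ᵥ (c • u - s • a) ⨯₃ (c • v - t • a) = c ^ 2 * a ⬝ᵥ u ⨯₃ v := by
  simp only [map_sub, map_smul, LinearMap.sub_apply, LinearMap.smul_apply, dotProduct_sub,
    dotProduct_smul, dot_self_cross, dot_cross_self, smul_eq_mul]
  ring

theorem dotProduct_single_cross_single (a : Fin 3 → R) (j k : Fin 3) :
    a ⬝ᵥ Pi.single j 1 ⨯₃ Pi.single k 1 = ∑ i, (eps i j k : R) * a i := by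
  fin_cases j <;> fin_cases k <;> simp [cross_apply, dotProduct, Fin.sum_univ_three, eps]

end CrossProduct

noncomputable def pauliDot (v : Fin 3 → ℝ) : Matrix (Fin 2) (Fin 2) ℂ :=
  ∑ i, (v i : ℂ) • pauli i

theorem pauliDot_eq (v : Fin 3 → ℝ) :
    pauliDot v = !![(v 2 : ℂ), v 0 - v 1 * Complex.I; v 0 + v 1 * Complex.I, -v 2] := by
  ext p q
  fin_cases p <;> fin_cases q <;> simp [pauliDot, pauli, Fin.sum_univ_three, sub_eq_add_neg]

theorem trace_pauliDot_mul_pauliDot_mul_pauliDot (n u v : Fin 3 → ℝ) :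
    (pauliDot n * pauliDot u * pauliDot v).trace = 2 * Complex.I * ((n ⬝ᵥ u ⨯₃ v : ℝ) : ℂ) := by
  simp only [pauliDot_eq, mul_fin_two, trace_fin_two, cross_apply, dotProduct, Fin.sum_univ_three,
    of_apply, cons_val', cons_val_zero, cons_val_one, cons_val_fin_one]
  push_cast
  ring

theorem trace_pauliDot_mul_pauliDot_mul_pauliDot_sub (n u v : Fin 3 → ℝ) :
    (pauliDot n * pauliDot u * pauliDot v).trace - (pauliDot n * pauliDot v * pauliDot u).trace
      = 4 * Complex.I * ((n ⬝ᵥ u ⨯₃ v : ℝ) : ℂ) := by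
  rw [trace_pauliDot_mul_pauliDot_mul_pauliDot, trace_pauliDot_mul_pauliDot_mul_pauliDot,
    ← cross_anticomm, dotProduct_neg]
  push_cast
  ring

noncomputable def pauliDotEntryCLM (p q : Fin 2) : E3 →L[ℝ] ℂ :=
  ∑ l, pauli l p q • (Complex.ofRealCLM.comp (EuclideanSpace.proj l))

theorem pauliDotEntryCLM_apply (p q : Fin 2) (x : E3) :
    pauliDotEntryCLM p q x = pauliDot x p q := by
  simp [pauliDotEntryCLM, pauliDot, Matrix.sum_apply, mul_comm]

theorem HasFDerivAt.of_fderiv_pauliDot_apply {G : Type*} [NormedAddCommGroup G]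
    [NormedSpace ℝ G] {f : G → E3} {f' : G →L[ℝ] E3} {a : G} (hf : HasFDerivAt f f' a) (h : G) :
    Matrix.of (fun p q => fderiv ℝ (fun x => pauliDot (f x) p q) a h) = pauliDot (f' h) := by
  ext p q
  simp_rw [Matrix.of_apply, ← pauliDotEntryCLM_apply]
  have hg : HasFDerivAt (fun x => pauliDotEntryCLM p q (f x))
      ((pauliDotEntryCLM p q).comp f') a :=
    (pauliDotEntryCLM p q).hasFDerivAt.comp a hf
  rw [hg.fderiv]
  rfl

theorem Fmat_eq_pauliDot (a : E3) : Fmat a = pauliDot (‖a‖⁻¹ • ⇑a) := by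
  rw [Fmat, pauliDot, Finset.smul_sum]
  refine Finset.sum_congr rfl fun i _ => ?_
  rw [RCLike.real_smul_eq_coe_smul (K := ℂ), smul_smul]
  simp

theorem dFmat_eq_pauliDot {a : E3} (ha : a ≠ 0) (j : Fin 3) :
    dFmat j a = pauliDot (‖a‖⁻¹ • Pi.single j 1 - ((‖a‖ ^ 3)⁻¹ * a j) • ⇑a) := by
  have hF : (fun x : E3 => Fmat x) = fun x : E3 => pauliDot (WithLp.ofLp (‖x‖⁻¹ • x)) := by
    funext x
    rw [Fmat_eq_pauliDot, WithLp.ofLp_smul]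
  rw [dFmat]
  simp_rw [hF]
  rw [(hasFDerivAt_inv_norm_smul ha).of_fderiv_pauliDot_apply]
  congr 1
  simp [EuclideanSpace.inner_single_right, smul_smul]

theorem stmt11 (a : E3) (ha : a ≠ 0) (j k : Fin 3) :
    (1 / 8 : ℂ) * ((Fmat a * dFmat j a * dFmat k a).trace
        - (Fmat a * dFmat k a * dFmat j a).trace)
      = (Complex.I / 2) * (((∑ i, (eps i j k : ℝ) * a i) / ‖a‖ ^ 3 : ℝ) : ℂ) := by
  have htriple : (‖a‖⁻¹ • ⇑a) ⬝ᵥ (‖a‖⁻¹ • Pi.single j 1 - ((‖a‖ ^ 3)⁻¹ * a j) • ⇑a) ⨯₃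
      (‖a‖⁻¹ • Pi.single k 1 - ((‖a‖ ^ 3)⁻¹ * a k) • ⇑a)
        = (∑ i, (eps i j k : ℝ) * a i) / ‖a‖ ^ 3 := by
    rw [smul_dotProduct, dotProduct_cross_sub_smul, dotProduct_single_cross_single, smul_eq_mul]
    field_simp
  rw [Fmat_eq_pauliDot, dFmat_eq_pauliDot ha, dFmat_eq_pauliDot ha,
    trace_pauliDot_mul_pauliDot_mul_pauliDot_sub, htriple]
  ring
end
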